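/- For all real h and finite r, Owen's T function satisfies T(h,r) = arctan(r)/(2π) − (r/(2π(1+r²))) Σ_{k=0}^∞ ((2k)!!/(2k+1)!!) P(k+1, q) (r²/(1+r²))^k, where q = (1+r²)h²/2. -/

import Mathlib

open Real MeasureTheory

/-!
Both sides agree at `h = 0`, where `T(0,r) = arctan r / 2π` and every `P(k+1, 0)` vanishes, so
it suffices to compare their `h`-derivatives. Differentiating under the integral and substituting
`s = h t` gives `∂ₕ T(h,r) = -e^{-h²/2} ∫₀^{rh} e^{-s²/2} ds / 2π`. On the other side,
`P(k+1,·)` has derivative `x^k e^{-x} / k!`, and termwise the series differentiates to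
`(1+r²) h e^{-q} Σ (rh)^{2k} / (2k+1)!!`. The two agree by the classical expansion
`∫₀^y e^{-s²/2} ds = e^{-y²/2} Σ y^{2k+1} / (2k+1)!!`, itself proved by the same device: both
sides vanish at `0`, and `S(y) = Σ y^{2k+1} / (2k+1)!!` satisfies `S' = 1 + y S`.
-/

/-- Owen's T function. -/
noncomputable def OwenT (h r : ℝ) : ℝ :=
  (1 / (2 * Real.pi)) * ∫ x in (0:ℝ)..r, Real.exp (-h ^ 2 * (1 + x ^ 2) / 2) / (1 + x ^ 2)

/-- Lower regularized incomplete gamma function P(a,x) = γ(a,x)/Γ(a). -/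
noncomputable def regGammaP (a x : ℝ) : ℝ :=
  (∫ t in (0:ℝ)..x, t ^ (a - 1) * Real.exp (-t)) / Real.Gamma a

/-- (2k)!! = 2^k k! -/
noncomputable def evenDF (k : ℕ) : ℝ := 2 ^ k * k.factorial

/-- (2k+1)!! = (2k+1)!/(2^k k!) -/
noncomputable def oddDF (k : ℕ) : ℝ := (2 * k + 1).factorial / (2 ^ k * k.factorial)

open scoped Nat

lemma oddDF_pos (k : ℕ) : 0 < oddDF k := by
  unfold oddDF; positivity

lemma oddDF_zero : oddDF 0 = 1 := by
  simp [oddDF]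

lemma oddDF_succ (k : ℕ) : oddDF (k + 1) = (2 * k + 3) * oddDF k := by
  simp only [oddDF, show 2 * (k + 1) + 1 = 2 * k + 1 + 1 + 1 by ring, Nat.factorial_succ,
    pow_succ]
  push_cast
  field_simp
  ring

lemma factorial_le_oddDF (k : ℕ) : (k ! : ℝ) ≤ oddDF k := by
  induction k with
  | zero => simp [oddDF_zero]
  | succ k ih =>
    rw [oddDF_succ, Nat.factorial_succ, Nat.cast_mul]
    gcongr
    push_cast
    linarith

lemma abs_pow_div_oddDF_le (x : ℝ) (k : ℕ) : |x ^ k / oddDF k| ≤ |x| ^ k / k ! := by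
  rw [abs_div, abs_pow, abs_of_pos (oddDF_pos k)]
  exact div_le_div_of_nonneg_left (by positivity) (by positivity) (factorial_le_oddDF k)

lemma summable_pow_div_oddDF (x : ℝ) : Summable fun k => x ^ k / oddDF k :=
  .of_norm_bounded (Real.summable_pow_div_factorial |x|) (abs_pow_div_oddDF_le x)

theorem hasDerivAt_tsum_of_forall_ball_bound {F : Type*} [NormedAddCommGroup F]
    [NormedSpace ℝ F] [CompleteSpace F] {g g' : ℕ → ℝ → F}
    (hg : ∀ k y, HasDerivAt (g k) (g' k y) y)
    (hg' : ∀ R, ∃ u : ℕ → ℝ, Summable u ∧ ∀ k y, |y| < R → ‖g' k y‖ ≤ u k)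
    (hg0 : Summable fun k => g k 0) (y : ℝ) :
    HasDerivAt (fun z => ∑' k, g k z) (∑' k, g' k y) y := by
  obtain ⟨u, hu, hu'⟩ := hg' (|y| + 1)
  exact hasDerivAt_tsum_of_isPreconnected hu Metric.isOpen_ball
    (convex_ball (0 : ℝ) (|y| + 1)).isPreconnected (fun k z _ => hg k z)
    (fun k z hz => hu' k z (by simpa using hz)) (Metric.mem_ball_self (by positivity)) hg0
    (by simp)

theorem eq_of_hasDerivAt_eq {𝕜 G : Type*} [RCLike 𝕜] [NormedAddCommGroup G]
    [NormedSpace 𝕜 G] {f g f' : 𝕜 → G} (hf : ∀ x, HasDerivAt f (f' x) x)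
    (hg : ∀ x, HasDerivAt g (f' x) x) {x : 𝕜} (hfg : f x = g x) (y : 𝕜) : f y = g y :=
  congrFun (eq_of_fderiv_eq (fun x => (hf x).differentiableAt) (fun x => (hg x).differentiableAt)
    (fun x => by rw [(hf x).hasFDerivAt.fderiv, (hg x).hasFDerivAt.fderiv]) x hfg) y

noncomputable def oddDFSeries (y : ℝ) : ℝ := ∑' k : ℕ, y ^ (2 * k + 1) / oddDF k

lemma pow_two_mul_add_one (y : ℝ) (k : ℕ) : y ^ (2 * k + 1) = y * (y ^ 2) ^ k := by
  rw [pow_succ, pow_mul, mul_comm]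

lemma hasSum_oddDFSeries (y : ℝ) :
    HasSum (fun k : ℕ => y ^ (2 * k + 1) / oddDF k) (oddDFSeries y) := by
  refine Summable.hasSum ?_
  simpa only [pow_two_mul_add_one, mul_div_assoc] using
    (summable_pow_div_oddDF (y ^ 2)).mul_left y

lemma oddDFSeries_zero : oddDFSeries 0 = 0 := by
  simp [oddDFSeries]

lemma oddDFSeries_eq_mul_tsum (y : ℝ) :
    oddDFSeries y = y * ∑' k : ℕ, (y ^ 2) ^ k / oddDF k := by
  simp only [oddDFSeries, pow_two_mul_add_one, mul_div_assoc, tsum_mul_left]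

lemma abs_two_mul_add_one_mul_pow_div_oddDF_le {y R : ℝ} (hy : |y| < R) (k : ℕ) :
    |(2 * k + 1) * y ^ (2 * k) / oddDF k| ≤ (3 * R ^ 2) ^ k / k ! := by
  have h3 : (2 * k + 1 : ℝ) ≤ 3 ^ k := by
    have := one_add_mul_le_pow (a := (2 : ℝ)) (by norm_num) k
    norm_num at this
    linarith
  have hy2 : |y ^ 2| ≤ R ^ 2 := by
    rw [abs_pow]; exact pow_le_pow_left₀ (abs_nonneg y) hy.le 2
  calc |(2 * k + 1) * y ^ (2 * k) / oddDF k|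
      = (2 * k + 1) * |(y ^ 2) ^ k / oddDF k| := by
        rw [mul_div_assoc, abs_mul, pow_mul, abs_of_pos (by positivity)]
    _ ≤ 3 ^ k * ((R ^ 2) ^ k / k !) := by
        gcongr
        exact (abs_pow_div_oddDF_le _ k).trans (by gcongr)
    _ = (3 * R ^ 2) ^ k / k ! := by rw [mul_pow, mul_div_assoc]

lemma hasDerivAt_oddDFSeries (y : ℝ) :
    HasDerivAt oddDFSeries (1 + y * oddDFSeries y) y := by
  have hterm : ∀ (k : ℕ) (y : ℝ), HasDerivAt (fun y => y ^ (2 * k + 1) / oddDF k)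
      ((2 * k + 1) * y ^ (2 * k) / oddDF k) y := fun k y => by
    refine ((hasDerivAt_pow (2 * k + 1) y).div_const (oddDF k)).congr_deriv ?_
    push_cast
    rfl
  have hderiv := hasDerivAt_tsum_of_forall_ball_bound hterm
    (fun R => ⟨_, Real.summable_pow_div_factorial (3 * R ^ 2),
      fun k y hy => abs_two_mul_add_one_mul_pow_div_oddDF_le hy k⟩)
    (by simp) y
  have hsum : HasSum (fun k : ℕ => (2 * k + 1) * y ^ (2 * k) / oddDF k)
      (1 + y * oddDFSeries y) := by
    have hshift (k : ℕ) : (2 * ((k : ℝ) + 1) + 1) * y ^ (2 * (k + 1)) / oddDF (k + 1)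
        = y * (y ^ (2 * k + 1) / oddDF k) := by
      rw [oddDF_succ]
      field_simp
      ring
    refine (hasSum_nat_add_iff' 1).mp ?_
    simpa [hshift, oddDF_zero] using (hasSum_oddDFSeries y).mul_left y
  rwa [hsum.tsum_eq] at hderiv

lemma exp_mul_oddDFSeries (y : ℝ) :
    exp (-y ^ 2 / 2) * oddDFSeries y = ∫ s in (0:ℝ)..y, exp (-s ^ 2 / 2) := by
  have hcont : Continuous fun s : ℝ => exp (-s ^ 2 / 2) := by fun_prop
  refine eq_of_hasDerivAt_eq (f := fun y => exp (-y ^ 2 / 2) * oddDFSeries y)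
    (fun x => ?_) (fun x => (hcont.integral_hasStrictDerivAt 0 x).hasDerivAt) (x := 0)
    (by simp [oddDFSeries_zero]) y
  have hexp : HasDerivAt (fun x : ℝ => exp (-x ^ 2 / 2)) (exp (-x ^ 2 / 2) * -x) x := by
    refine ((hasDerivAt_pow 2 x).fun_neg.div_const 2).exp.congr_deriv ?_
    push_cast
    ring
  refine (hexp.mul (hasDerivAt_oddDFSeries x)).congr_deriv ?_
  ring

lemma regGammaP_zero_right (a : ℝ) : regGammaP a 0 = 0 := by
  simp [regGammaP]

lemma hasDerivAt_regGammaP {a : ℝ} (ha : 1 ≤ a) (x : ℝ) :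
    HasDerivAt (regGammaP a) (x ^ (a - 1) * exp (-x) / Gamma a) x := by
  have hcont : Continuous fun t : ℝ => t ^ (a - 1) * exp (-t) :=
    (continuous_rpow_const (by linarith)).mul (by fun_prop)
  exact (hcont.integral_hasStrictDerivAt 0 x).hasDerivAt.div_const _

lemma hasDerivAt_regGammaP_term (r : ℝ) (k : ℕ) (x : ℝ) :
    HasDerivAt (fun h => evenDF k / oddDF k * regGammaP (k + 1) ((1 + r ^ 2) * h ^ 2 / 2) *
        (r ^ 2 / (1 + r ^ 2)) ^ k)
      ((1 + r ^ 2) * x * exp (-((1 + r ^ 2) * x ^ 2 / 2)) * (((r * x) ^ 2) ^ k / oddDF k)) x := by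
  have hq : HasDerivAt (fun h => (1 + r ^ 2) * h ^ 2 / 2) ((1 + r ^ 2) * x) x := by
    refine ((hasDerivAt_pow 2 x).const_mul (1 + r ^ 2)).div_const 2 |>.congr_deriv ?_
    push_cast
    ring
  have hP := hasDerivAt_regGammaP (a := k + 1) (by simp) ((1 + r ^ 2) * x ^ 2 / 2)
  refine (((hP.comp x hq).const_mul (evenDF k / oddDF k)).mul_const
    ((r ^ 2 / (1 + r ^ 2)) ^ k)).congr_deriv ?_
  have hpow : (2 : ℝ) ^ k * (((1 + r ^ 2) * x ^ 2 / 2) ^ k * (r ^ 2 / (1 + r ^ 2)) ^ k)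
      = ((r * x) ^ 2) ^ k := by
    rw [← mul_pow, ← mul_pow]
    congr 1
    field_simp
  rw [add_sub_cancel_right, rpow_natCast, Gamma_nat_eq_factorial, evenDF, ← hpow]
  field_simp

lemma hasDerivAt_regGammaP_series (r x : ℝ) :
    HasDerivAt (fun h => ∑' k : ℕ, evenDF k / oddDF k *
        regGammaP (k + 1) ((1 + r ^ 2) * h ^ 2 / 2) * (r ^ 2 / (1 + r ^ 2)) ^ k)
      ((1 + r ^ 2) * x * exp (-((1 + r ^ 2) * x ^ 2 / 2)) *
        ∑' k : ℕ, ((r * x) ^ 2) ^ k / oddDF k) x := by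
  have hbound (R : ℝ) : ∃ u : ℕ → ℝ, Summable u ∧ ∀ (k : ℕ) (z : ℝ), |z| < R →
      ‖(1 + r ^ 2) * z * exp (-((1 + r ^ 2) * z ^ 2 / 2)) * (((r * z) ^ 2) ^ k / oddDF k)‖
        ≤ u k := by
    refine ⟨_, (Real.summable_pow_div_factorial ((r * R) ^ 2)).mul_left ((1 + r ^ 2) * R),
      fun k z hz => ?_⟩
    have hexp : exp (-((1 + r ^ 2) * z ^ 2 / 2)) ≤ 1 :=
      exp_le_one_iff.mpr (by nlinarith [sq_nonneg r, sq_nonneg z])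
    rw [Real.norm_eq_abs, abs_mul, abs_mul, abs_mul,
      abs_of_pos (by positivity : (0:ℝ) < 1 + r ^ 2), abs_of_pos (exp_pos _)]
    have hR : 0 ≤ R := (abs_nonneg z).trans hz.le
    have hpow : |(r * z) ^ 2| ^ k / k ! ≤ ((r * R) ^ 2) ^ k / k ! := by
      have hsq : |(r * z) ^ 2| ≤ (r * R) ^ 2 := by
        rw [abs_pow, abs_mul, mul_pow, mul_pow, sq_abs]
        gcongr
      gcongr
    refine mul_le_mul ?_ ((abs_pow_div_oddDF_le _ k).trans hpow) (abs_nonneg _) (by positivity)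
    calc (1 + r ^ 2) * |z| * exp (-((1 + r ^ 2) * z ^ 2 / 2))
        ≤ (1 + r ^ 2) * R * 1 := by gcongr
      _ = _ := mul_one _
  simpa only [tsum_mul_left] using
    hasDerivAt_tsum_of_forall_ball_bound (hasDerivAt_regGammaP_term r) hbound
      (by simp [regGammaP_zero_right]) x

lemma OwenT_zero_left (r : ℝ) : OwenT 0 r = arctan r / (2 * π) := by
  simp [OwenT, div_eq_inv_mul]

lemma integral_mul_exp_neg_sq_mul_one_add_sq (r x : ℝ) :
    ∫ t in (0:ℝ)..r, x * exp (-x ^ 2 * (1 + t ^ 2) / 2)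
      = exp (-x ^ 2 / 2) * ∫ s in (0:ℝ)..r * x, exp (-s ^ 2 / 2) := by
  have hsplit (t : ℝ) : x * exp (-x ^ 2 * (1 + t ^ 2) / 2)
      = exp (-x ^ 2 / 2) * (x * exp (-(x * t) ^ 2 / 2)) := by
    rw [mul_left_comm, ← exp_add]
    ring_nf
  simp_rw [hsplit]
  rw [intervalIntegral.integral_const_mul, intervalIntegral.integral_const_mul,
    intervalIntegral.mul_integral_comp_mul_left (f := fun s => exp (-s ^ 2 / 2)), mul_zero,
    mul_comm x r]

lemma hasDerivAt_OwenT_left (r x : ℝ) :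
    HasDerivAt (fun h => OwenT h r)
      (-(exp (-x ^ 2 / 2) * ∫ s in (0:ℝ)..r * x, exp (-s ^ 2 / 2)) / (2 * π)) x := by
  have hcont (z : ℝ) : Continuous fun t : ℝ => exp (-z ^ 2 * (1 + t ^ 2) / 2) / (1 + t ^ 2) :=
    .div (by fun_prop) (by fun_prop) fun t => by positivity
  have hderiv (t z : ℝ) : HasDerivAt (fun z => exp (-z ^ 2 * (1 + t ^ 2) / 2) / (1 + t ^ 2))
      (-(z * exp (-z ^ 2 * (1 + t ^ 2) / 2))) z := by
    refine ((((hasDerivAt_pow 2 z).fun_neg.mul_const (1 + t ^ 2)).div_const 2).exp.div_const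
      (1 + t ^ 2)).congr_deriv ?_
    field_simp
    ring
  have hbound (t z : ℝ) (hz : z ∈ Metric.ball x 1) :
      ‖-(z * exp (-z ^ 2 * (1 + t ^ 2) / 2))‖ ≤ |x| + 1 := by
    have hz' : |z| ≤ |x| + 1 := by
      have := abs_sub_abs_le_abs_sub z x
      rw [Metric.mem_ball, Real.dist_eq] at hz
      linarith
    have hexp : exp (-z ^ 2 * (1 + t ^ 2) / 2) ≤ 1 :=
      exp_le_one_iff.mpr (by nlinarith [sq_nonneg z, sq_nonneg t])
    rw [norm_neg, Real.norm_eq_abs, abs_mul, abs_of_pos (exp_pos _)]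
    nlinarith [abs_nonneg z, exp_pos (-z ^ 2 * (1 + t ^ 2) / 2)]
  have hI := (intervalIntegral.hasDerivAt_integral_of_dominated_loc_of_deriv_le
    (μ := volume) (a := 0) (b := r) (bound := fun _ => |x| + 1)
    (Metric.ball_mem_nhds x one_pos) (.of_forall fun z => (hcont z).aestronglyMeasurable)
    ((hcont x).intervalIntegrable _ _) (by fun_prop : Continuous _).aestronglyMeasurable
    (ae_of_all _ fun t _ z hz => hbound t z hz) intervalIntegrable_const
    (ae_of_all _ fun t _ z _ => hderiv t z)).2.const_mul (1 / (2 * π))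
  refine hI.congr_deriv ?_
  rw [intervalIntegral.integral_neg, integral_mul_exp_neg_sq_mul_one_add_sq]
  ring

theorem OwenT_series_P (h r : ℝ) :
    OwenT h r =
      Real.arctan r / (2 * Real.pi) -
        (r / (2 * Real.pi * (1 + r ^ 2))) *
          ∑' k : ℕ, (evenDF k / oddDF k) *
            regGammaP (k + 1) ((1 + r ^ 2) * h ^ 2 / 2) * (r ^ 2 / (1 + r ^ 2)) ^ k := by
  apply eq_of_hasDerivAt_eq (f := fun h => OwenT h r) (hasDerivAt_OwenT_left r) (x := 0)
  · intro x
    refine (((hasDerivAt_regGammaP_series r x).const_mul _).const_sub _).congr_deriv ?_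
    have hexp : exp (-((1 + r ^ 2) * x ^ 2 / 2))
        = exp (-x ^ 2 / 2) * exp (-(r * x) ^ 2 / 2) := by
      rw [← exp_add]
      ring_nf
    rw [← exp_mul_oddDFSeries, oddDFSeries_eq_mul_tsum, hexp]
    field_simp
  · simp [OwenT_zero_left, regGammaP_zero_right]
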